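/- arXiv:1505.00220 — 8 statements merged into one kernel-verified Lean document; each statement's English description precedes it below -/
import Mathlib

section
/- Let C be a symmetric monoidal category (with tensor unit k) equipped with an algebra modality (T, μ, η, m, e). For every T-algebra (A, ν), the morphisms m_A = (η_A ⊗ η_A);m_{TA};ν : A ⊗ A → A and e_A = e_A;ν : k → A make A a commutative algebra in C; moreover every morphism of T-algebras is an algebra homomorphism for these structures, so this assignment defines a functor from the category of T-algebras to the category of commutative algebras in C. Applied to the free T-algebra (TA, μ_A), this construction returns the original commutative algebra (TA, m, e). -/
/-!
The structure map `ν : T A ⟶ A` of a `T`-algebra is split by `η_A`, and it is an algebra map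
from `(T A, m, e)` to `(A, m_A, e_A)`: this follows from naturality of `η`, from `T ν` and `μ_A`
being algebra maps, and from the law `μ_A ; ν = T ν ; ν`. The commutative algebra axioms
for `A`, and the homomorphism property of `T`-algebra maps, then descend along the split
epimorphism `ν`. On a free algebra, `ν = μ` and `η ; μ = 1` give back `m` and `e`.
-/

open CategoryTheory CategoryTheory.Limits CategoryTheory.MonoidalCategory

universe v u

namespace CodiffPaper

/-- A category enriched in commutative monoids: each hom-set is a commutative
monoid and composition is biadditive (and preserves zero). -/
class CMonEnriched (C : Type u) [Category.{v} C] where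
  [homMonoid : ∀ X Y : C, AddCommMonoid (X ⟶ Y)]
  add_comp : ∀ {X Y Z : C} (f g : X ⟶ Y) (h : Y ⟶ Z), (f + g) ≫ h = f ≫ h + g ≫ h
  comp_add : ∀ {X Y Z : C} (f : X ⟶ Y) (g h : Y ⟶ Z), f ≫ (g + h) = f ≫ g + f ≫ h
  zero_comp : ∀ {X Y Z : C} (f : Y ⟶ Z), (0 : X ⟶ Y) ≫ f = (0 : X ⟶ Z)
  comp_zero : ∀ {X Y Z : C} (f : X ⟶ Y), f ≫ (0 : Y ⟶ Z) = (0 : X ⟶ Z)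

attribute [instance] CMonEnriched.homMonoid

instance (priority := 100) CMonEnriched.toHasZeroMorphisms
    (C : Type u) [Category.{v} C] [CMonEnriched C] : HasZeroMorphisms C where
  zero X Y := inferInstance
  comp_zero := fun {X Y} f Z => CMonEnriched.comp_zero f
  zero_comp := fun X {Y Z} f => CMonEnriched.zero_comp f

/-- An additive symmetric monoidal category: commutative-monoid enriched, and
the tensor product is additive in each variable. -/
class AdditiveMonoidal (C : Type u) [Category.{v} C] [MonoidalCategory C] extends
    CMonEnriched C where
  add_tensorHom : ∀ {X Y Z W : C} (f g : X ⟶ Y) (h : Z ⟶ W),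
    (f + g) ⊗ₘ h = (f ⊗ₘ h) + (g ⊗ₘ h)
  tensorHom_add : ∀ {X Y Z W : C} (f : X ⟶ Y) (g h : Z ⟶ W),
    f ⊗ₘ (g + h) = (f ⊗ₘ g) + (f ⊗ₘ h)
  zero_tensorHom : ∀ {X Y Z W : C} (h : Z ⟶ W), (0 : X ⟶ Y) ⊗ₘ h = 0
  tensorHom_zero : ∀ {X Y Z W : C} (f : X ⟶ Y), f ⊗ₘ (0 : Z ⟶ W) = 0

variable {C : Type u} [Category.{v} C]

/-- `π : Y ⟶ Q` is a coequalizer of `f` and `g` (elementwise formulation). -/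
def IsCoeq {X Y Q : C} (f g : X ⟶ Y) (π : Y ⟶ Q) : Prop :=
  f ≫ π = g ≫ π ∧ ∀ {Z : C} (h : Y ⟶ Z), f ≫ h = g ≫ h → ∃! t : Q ⟶ Z, π ≫ t = h

/-- The tensor product preserves reflexive coequalizers in each variable. -/
def TensorPreservesReflCoeq (C : Type u) [Category.{v} C] [MonoidalCategory C] : Prop :=
  ∀ {X Y Q : C} (f g : X ⟶ Y) (s : Y ⟶ X) (π : Y ⟶ Q),
    s ≫ f = 𝟙 Y → s ≫ g = 𝟙 Y → IsCoeq f g π →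
      ∀ Z : C, IsCoeq (Z ◁ f) (Z ◁ g) (Z ◁ π) ∧ IsCoeq (f ▷ Z) (g ▷ Z) (π ▷ Z)

section Monoidal

variable [MonoidalCategory C]

/-- A commutative algebra (commutative monoid object) structure. -/
structure IsCommAlg [SymmetricCategory C] {A : C} (mul : A ⊗ A ⟶ A) (unit : 𝟙_ C ⟶ A) : Prop where
  one_mul : (unit ▷ A) ≫ mul = (λ_ A).hom
  mul_one : (A ◁ unit) ≫ mul = (ρ_ A).hom
  mul_assoc : (mul ▷ A) ≫ mul = (α_ A A A).hom ≫ (A ◁ mul) ≫ mul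
  mul_comm : (β_ A A).hom ≫ mul = mul

/-- `f : A ⟶ B` is a homomorphism of algebras. -/
structure IsAlgHom {A B : C} (mulA : A ⊗ A ⟶ A) (unitA : 𝟙_ C ⟶ A)
    (mulB : B ⊗ B ⟶ B) (unitB : 𝟙_ C ⟶ B) (f : A ⟶ B) : Prop where
  map_mul : (f ⊗ₘ f) ≫ mulB = mulA ≫ f
  map_one : unitA ≫ f = unitB

/-- `act : A ⊗ M ⟶ M` is a module structure on `M` over the algebra `(A, mulA, unitA)`. -/
structure IsModule {A M : C} (mulA : A ⊗ A ⟶ A) (unitA : 𝟙_ C ⟶ A)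
    (act : A ⊗ M ⟶ M) : Prop where
  one_act : (unitA ▷ M) ≫ act = (λ_ M).hom
  mul_act : (mulA ▷ M) ≫ act = (α_ A A M).hom ≫ (A ◁ act) ≫ act

/-- A morphism of modules over `A` (a linear map). -/
def IsModuleMap {A M N : C} (actM : A ⊗ M ⟶ M) (actN : A ⊗ N ⟶ N) (h : M ⟶ N) : Prop :=
  actM ≫ h = (A ◁ h) ≫ actN

/-- The free `A`-module structure on `A ⊗ X`. -/
def freeAct {A : C} (mulA : A ⊗ A ⟶ A) (X : C) : A ⊗ (A ⊗ X) ⟶ A ⊗ X :=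
  (α_ A A X).inv ≫ (mulA ▷ X)

/-- `der : A ⟶ M` is a derivation from the algebra `(A, mulA, unitA)` to the module
`(M, act)`:  `m;der = c;(1⊗der);• + (1⊗der);•` and `e;der = 0`. -/
def IsDerivation [SymmetricCategory C] [CMonEnriched C] {A M : C}
    (mulA : A ⊗ A ⟶ A) (unitA : 𝟙_ C ⟶ A) (act : A ⊗ M ⟶ M) (der : A ⟶ M) : Prop :=
  (mulA ≫ der = (β_ A A).hom ≫ (A ◁ der) ≫ act + (A ◁ der) ≫ act) ∧ unitA ≫ der = 0

variable [SymmetricCategory C]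

/-- An algebra modality: each `T X` is naturally a commutative algebra. -/
structure IsAlgebraModality (T : Monad C)
    (mul : ∀ X : C, T.obj X ⊗ T.obj X ⟶ T.obj X)
    (unit : ∀ X : C, 𝟙_ C ⟶ T.obj X) : Prop where
  commAlg : ∀ X : C, IsCommAlg (mul X) (unit X)
  map_hom : ∀ {X Y : C} (f : X ⟶ Y),
    IsAlgHom (mul X) (unit X) (mul Y) (unit Y) (T.map f)
  mu_hom : ∀ X : C,
    IsAlgHom (mul (T.obj X)) (unit (T.obj X)) (mul X) (unit X) (T.μ.app X)

/-- A (bundled) algebra modality on `C`. -/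
structure AlgebraModality (C : Type u) [Category.{v} C] [MonoidalCategory C]
    [SymmetricCategory C] where
  T : Monad C
  mul : ∀ X : C, T.obj X ⊗ T.obj X ⟶ T.obj X
  unit : ∀ X : C, 𝟙_ C ⟶ T.obj X
  ismod : IsAlgebraModality T mul unit

/-- The multiplication of the commutative algebra induced on a `T`-algebra. -/
def algMul (Φ : AlgebraModality C) (A : Φ.T.Algebra) : A.A ⊗ A.A ⟶ A.A :=
  (Φ.T.η.app A.A ⊗ₘ Φ.T.η.app A.A) ≫ Φ.mul A.A ≫ A.a

/-- The unit of the commutative algebra induced on a `T`-algebra. -/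
def algUnit (Φ : AlgebraModality C) (A : Φ.T.Algebra) : 𝟙_ C ⟶ A.A :=
  Φ.unit A.A ≫ A.a

/-- `f : A ⟶ B` is a homomorphism of `T`-algebras (elementwise formulation). -/
def IsTAlgebraHom (T : Monad C) {A B : C} (νA : T.obj A ⟶ A) (νB : T.obj B ⟶ B)
    (f : A ⟶ B) : Prop :=
  T.map f ≫ νB = νA ≫ f

/-- `b : T X ⟶ X` is a `T`-algebra structure map. -/
def IsTAlgStr (T : Monad C) {X : C} (b : T.obj X ⟶ X) : Prop :=
  (T.η.app X ≫ b = 𝟙 X) ∧ (T.μ.app X ≫ b = T.map b ≫ b)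

variable [AdditiveMonoidal C]

/-- The axioms for a codifferential category on an additive symmetric monoidal
category: an algebra modality together with a deriving transform satisfying
(d1)–(d4). -/
structure IsCodifferential (T : Monad C)
    (mul : ∀ X : C, T.obj X ⊗ T.obj X ⟶ T.obj X)
    (unit : ∀ X : C, 𝟙_ C ⟶ T.obj X)
    (d : ∀ X : C, T.obj X ⟶ T.obj X ⊗ X) : Prop where
  ismod : IsAlgebraModality T mul unit
  d_natural : ∀ {X Y : C} (f : X ⟶ Y), T.map f ≫ d Y = d X ≫ (T.map f ⊗ₘ f)
  d1 : ∀ X : C, unit X ≫ d X = 0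
  d2 : ∀ X : C, mul X ≫ d X =
    (T.obj X ◁ d X) ≫ (α_ (T.obj X) (T.obj X) X).inv ≫ (mul X ▷ X)
    + (d X ▷ T.obj X) ≫ (α_ (T.obj X) X (T.obj X)).hom ≫
        (T.obj X ◁ (β_ X (T.obj X)).hom) ≫ (α_ (T.obj X) (T.obj X) X).inv ≫ (mul X ▷ X)
  d3 : ∀ X : C, T.η.app X ≫ d X = (λ_ X).inv ≫ (unit X ▷ X)
  d4 : ∀ X : C, T.μ.app X ≫ d X =
    d (T.obj X) ≫ (T.μ.app X ⊗ₘ d X) ≫ (α_ (T.obj X) (T.obj X) X).inv ≫ (mul X ▷ X)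

/-- A (bundled) codifferential category structure on `C`. -/
structure Codifferential (C : Type u) [Category.{v} C] [MonoidalCategory C]
    [SymmetricCategory C] [AdditiveMonoidal C] extends AlgebraModality C where
  d : ∀ X : C, T.obj X ⟶ T.obj X ⊗ X
  iscodiff : IsCodifferential T mul unit d

section Biproducts

variable [HasBinaryBiproducts C]

/-- The second component of the structure map of `W(A,M)`:
`β₂ = d;(Tπ₁ ⊗ π₂);(ν ⊗ 1);•`. -/
noncomputable def Wbeta2 (D : Codifferential C) (A : D.T.Algebra) {M : C} (act : A.A ⊗ M ⟶ M) :
    D.T.obj (A.A ⊞ M) ⟶ M :=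
  D.d (A.A ⊞ M) ≫ (D.T.map biprod.fst ⊗ₘ biprod.snd) ≫ (A.a ⊗ₘ 𝟙 M) ≫ act

/-- The structure map `β = ⟨β₁, β₂⟩ : T(A ⊕ M) ⟶ A ⊕ M` of `W(A,M)`. -/
noncomputable def Wbeta (D : Codifferential C) (A : D.T.Algebra) {M : C} (act : A.A ⊗ M ⟶ M) :
    D.T.obj (A.A ⊞ M) ⟶ A.A ⊞ M :=
  biprod.lift (D.T.map biprod.fst ≫ A.a) (Wbeta2 D A act)

end Biproducts

/-- A Kähler category: an additive symmetric monoidal category with an algebra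
modality such that every algebra `T X` has a module of Kähler differentials. -/
structure KahlerCategory (C : Type u) [Category.{v} C] [MonoidalCategory C]
    [SymmetricCategory C] [AdditiveMonoidal C] extends AlgebraModality C where
  Ω : C → C
  act : ∀ X : C, T.obj X ⊗ Ω X ⟶ Ω X
  ismodule : ∀ X : C, IsModule (mul X) (unit X) (act X)
  dK : ∀ X : C, T.obj X ⟶ Ω X
  isder : ∀ X : C, IsDerivation (mul X) (unit X) (act X) (dK X)
  universal : ∀ (X : C) {M : C} (actM : T.obj X ⊗ M ⟶ M),
    IsModule (mul X) (unit X) actM →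
    ∀ der : T.obj X ⟶ M, IsDerivation (mul X) (unit X) actM der →
      ∃! h : Ω X ⟶ M, IsModuleMap (act X) actM h ∧ dK X ≫ h = der

end Monoidal

section SplitEpi

variable [MonoidalCategory C]

instance whiskerLeft_isSplitEpi (X : C) {Y Z : C} (f : Y ⟶ Z) [IsSplitEpi f] :
    IsSplitEpi (X ◁ f) :=
  inferInstanceAs (IsSplitEpi ((tensorLeft X).map f))

instance whiskerRight_isSplitEpi {X Y : C} (f : X ⟶ Y) (Z : C) [IsSplitEpi f] :
    IsSplitEpi (f ▷ Z) :=
  inferInstanceAs (IsSplitEpi ((tensorRight Z).map f))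

instance tensorHom_isSplitEpi {W X Y Z : C} (f : W ⟶ X) (g : Y ⟶ Z) [IsSplitEpi f]
    [IsSplitEpi g] : IsSplitEpi (f ⊗ₘ g) :=
  IsSplitEpi.mk' ⟨section_ f ⊗ₘ section_ g, by simp [tensorHom_comp_tensorHom]⟩

variable {A B D : C} {mulA : A ⊗ A ⟶ A} {unitA : 𝟙_ C ⟶ A} {mulB : B ⊗ B ⟶ B}
  {unitB : 𝟙_ C ⟶ B} {mulD : D ⊗ D ⟶ D} {unitD : 𝟙_ C ⟶ D}

theorem IsAlgHom.comp {f : A ⟶ B} {g : B ⟶ D} (hf : IsAlgHom mulA unitA mulB unitB f)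
    (hg : IsAlgHom mulB unitB mulD unitD g) : IsAlgHom mulA unitA mulD unitD (f ≫ g) where
  map_mul := by rw [← tensorHom_comp_tensorHom_assoc, hg.map_mul, reassoc_of% hf.map_mul]
  map_one := by rw [reassoc_of% hf.map_one, hg.map_one]

theorem IsAlgHom.of_isSplitEpi_comp {p : B ⟶ A} [IsSplitEpi p] {f : A ⟶ D}
    (hp : IsAlgHom mulB unitB mulA unitA p) (hpf : IsAlgHom mulB unitB mulD unitD (p ≫ f)) :
    IsAlgHom mulA unitA mulD unitD f where
  map_mul := by
    rw [← cancel_epi (p ⊗ₘ p), tensorHom_comp_tensorHom_assoc, hpf.map_mul,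
      reassoc_of% hp.map_mul]
  map_one := by rw [← hp.map_one, Category.assoc, hpf.map_one]

theorem IsCommAlg.of_isAlgHom_of_isSplitEpi [SymmetricCategory C] (hB : IsCommAlg mulB unitB)
    {p : B ⟶ A} [IsSplitEpi p] (hp : IsAlgHom mulB unitB mulA unitA p) :
    IsCommAlg mulA unitA where
  one_mul := by
    rw [← cancel_epi (𝟙_ C ◁ p), whisker_exchange_assoc, ← hp.map_one, comp_whiskerRight_assoc,
      ← tensorHom_def_assoc, hp.map_mul, reassoc_of% hB.one_mul, leftUnitor_naturality]
  mul_one := by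
    rw [← cancel_epi (p ▷ 𝟙_ C), ← whisker_exchange_assoc, ← hp.map_one, whiskerLeft_comp_assoc,
      ← tensorHom_def'_assoc, hp.map_mul, reassoc_of% hB.mul_one, rightUnitor_naturality]
  mul_assoc := by
    rw [← cancel_epi ((p ⊗ₘ p) ⊗ₘ p)]
    calc ((p ⊗ₘ p) ⊗ₘ p) ≫ (mulA ▷ A) ≫ mulA
        = (mulB ▷ B) ≫ mulB ≫ p := by
          rw [tensorHom_comp_whiskerRight_assoc, hp.map_mul, ← whiskerRight_comp_tensorHom_assoc,
            hp.map_mul]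
      _ = (α_ B B B).hom ≫ (B ◁ mulB) ≫ (p ⊗ₘ p) ≫ mulA := by
          rw [reassoc_of% hB.mul_assoc, hp.map_mul]
      _ = ((p ⊗ₘ p) ⊗ₘ p) ≫ (α_ A A A).hom ≫ (A ◁ mulA) ≫ mulA := by
          rw [whiskerLeft_comp_tensorHom_assoc, ← hp.map_mul, ← tensorHom_comp_whiskerLeft_assoc,
            associator_naturality_assoc]
  mul_comm := by
    rw [← cancel_epi (p ⊗ₘ p), BraidedCategory.braiding_naturality_assoc, hp.map_mul,
      reassoc_of% hB.mul_comm]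

end SplitEpi

instance Monad.Algebra.isSplitEpi_a {T : Monad C} (A : T.Algebra) : IsSplitEpi A.a :=
  IsSplitEpi.mk' ⟨T.η.app A.A, A.unit⟩

section AlgebraModality

variable [MonoidalCategory C] [SymmetricCategory C] (Φ : AlgebraModality C)

theorem isAlgHom_structureMap (A : Φ.T.Algebra) :
    IsAlgHom (Φ.mul A.A) (Φ.unit A.A) (algMul Φ A) (algUnit Φ A) A.a where
  map_mul := by
    have hη : A.a ≫ Φ.T.η.app A.A = Φ.T.η.app (Φ.T.obj A.A) ≫ Φ.T.map A.a :=
      Φ.T.η.naturality A.a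
    calc (A.a ⊗ₘ A.a) ≫ algMul Φ A
        = (Φ.T.η.app _ ⊗ₘ Φ.T.η.app _) ≫ (Φ.T.map A.a ⊗ₘ Φ.T.map A.a) ≫ Φ.mul A.A ≫ A.a := by
          rw [algMul, tensorHom_comp_tensorHom_assoc, hη, ← tensorHom_comp_tensorHom_assoc]
      _ = (Φ.T.η.app _ ⊗ₘ Φ.T.η.app _) ≫ (Φ.T.μ.app A.A ⊗ₘ Φ.T.μ.app A.A) ≫ Φ.mul A.A ≫ A.a := by
          rw [reassoc_of% (Φ.ismod.map_hom A.a).map_mul, ← A.assoc,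
            reassoc_of% (Φ.ismod.mu_hom A.A).map_mul]
      _ = Φ.mul A.A ≫ A.a := by
          rw [tensorHom_comp_tensorHom_assoc, Monad.left_unit, id_tensorHom_id, Category.id_comp]
  map_one := rfl

theorem isCommAlg_algMul (A : Φ.T.Algebra) : IsCommAlg (algMul Φ A) (algUnit Φ A) :=
  (Φ.ismod.commAlg A.A).of_isAlgHom_of_isSplitEpi (isAlgHom_structureMap Φ A)

theorem isAlgHom_hom {A B : Φ.T.Algebra} (f : A ⟶ B) :
    IsAlgHom (algMul Φ A) (algUnit Φ A) (algMul Φ B) (algUnit Φ B) f.f :=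
  (isAlgHom_structureMap Φ A).of_isSplitEpi_comp <| by
    rw [← f.h]
    exact (Φ.ismod.map_hom f.f).comp (isAlgHom_structureMap Φ B)

theorem algMul_free (X : C) : algMul Φ (Φ.T.free.obj X) = Φ.mul X := by
  change (Φ.T.η.app _ ⊗ₘ Φ.T.η.app _) ≫ Φ.mul (Φ.T.obj X) ≫ Φ.T.μ.app X = Φ.mul X
  rw [← (Φ.ismod.mu_hom X).map_mul, tensorHom_comp_tensorHom_assoc, Monad.left_unit,
    id_tensorHom_id, Category.id_comp]

theorem algUnit_free (X : C) : algUnit Φ (Φ.T.free.obj X) = Φ.unit X :=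
  (Φ.ismod.mu_hom X).map_one

def algebraToCommMon : Φ.T.Algebra ⥤ CommMon C where
  obj A :=
    letI : MonObj A.A :=
      { one := algUnit Φ A
        mul := algMul Φ A
        one_mul := (isCommAlg_algMul Φ A).one_mul
        mul_one := (isCommAlg_algMul Φ A).mul_one
        mul_assoc := (isCommAlg_algMul Φ A).mul_assoc }
    { X := A.A
      comm := ⟨(isCommAlg_algMul Φ A).mul_comm⟩ }
  map f :=
    { hom :=
        { hom := f.f
          isMonHom_hom := ⟨(isAlgHom_hom Φ f).map_one, (isAlgHom_hom Φ f).map_mul.symm⟩ } }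

end AlgebraModality

/-- the induced commutative algebra structure on `T`-algebras, functoriality
into commutative algebras, and the computation on free `T`-algebras. -/
theorem statement0 {C : Type u} [Category.{v} C] [MonoidalCategory C] [SymmetricCategory C]
    (Φ : AlgebraModality C) :
    (∀ A : Φ.T.Algebra, IsCommAlg (algMul Φ A) (algUnit Φ A)) ∧
    (∀ (A B : Φ.T.Algebra) (f : A ⟶ B),
      IsAlgHom (algMul Φ A) (algUnit Φ A) (algMul Φ B) (algUnit Φ B) f.f) ∧
    (∃ F : Φ.T.Algebra ⥤ CommMon C,
      (∀ A : Φ.T.Algebra,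
        (F.obj A).X = A.A ∧ HEq (MonObj.mul (X := (F.obj A).X)) (algMul Φ A) ∧ HEq (MonObj.one (X := (F.obj A).X)) (algUnit Φ A)) ∧
      ∀ (A B : Φ.T.Algebra) (f : A ⟶ B), HEq (F.map f).hom.hom f.f) ∧
    (∀ X : C,
      algMul Φ (Φ.T.free.obj X) = Φ.mul X ∧ algUnit Φ (Φ.T.free.obj X) = Φ.unit X) :=
  ⟨isCommAlg_algMul Φ, fun _ _ f => isAlgHom_hom Φ f,
    ⟨algebraToCommMon Φ, fun _ => ⟨rfl, HEq.rfl, HEq.rfl⟩, fun _ _ _ => HEq.rfl⟩,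
    fun X => ⟨algMul_free Φ X, algUnit_free Φ X⟩⟩

end CodiffPaper
end

section
/- Let C be a codifferential category with finite coproducts, (A, ν) a T-algebra, and M a module over the induced algebra A. Then the commutative algebra structure induced (via the assignment of Theorem 2.13) by the T-algebra W(A,M) on A⊕M coincides with the infinitesimal extension algebra structure: its multiplication m_{W(A,M)} : (A⊕M) ⊗ (A⊕M) → A⊕M has first component (π₁ ⊗ π₁);m_A and second component (1 + c);(π₁ ⊗ π₂);•_M, where c is the symmetry of (A⊕M) ⊗ (A⊕M). -/
open CategoryTheory CategoryTheory.Limits CategoryTheory.MonoidalCategory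

universe v u

namespace CodiffPaper

variable {C : Type u} [Category.{v} C]

/-! `Tπ₁ ; ν` is a morphism of algebras `T(A ⊕ M) ⟶ A` restricting to `π₁` along `η`, which gives
the first component. For the second, the Leibniz rule (d2) together with (d3) says that a product
of two generators `η x · η y` has derivative `η x ⊗ y + η y ⊗ x`; composing with
`(Tπ₁ ; ν) ⊗ π₂` and the action turns this into `x • π₂ y + y • π₂ x`. -/

lemma eta_comp_map_comp_a (T : Monad C) (B : T.Algebra) {X : C} (g : X ⟶ B.A) :
    T.η.app X ≫ T.map g ≫ B.a = g := by
  rw [← Category.assoc, ← T.η.naturality g, Category.assoc, B.unit]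
  exact Category.comp_id g

section Monoidal

variable [MonoidalCategory C]

lemma whiskerLeft_unit_comp_freeAct {A : C} {mul : A ⊗ A ⟶ A} {unit : 𝟙_ C ⟶ A}
    (mul_one : (A ◁ unit) ≫ mul = (ρ_ A).hom) (X : C) :
    (A ◁ ((λ_ X).inv ≫ (unit ▷ X))) ≫ freeAct mul X = 𝟙 (A ⊗ X) := by
  simp only [freeAct, MonoidalCategory.whiskerLeft_comp, Category.assoc,
    associator_inv_naturality_middle_assoc, ← comp_whiskerRight, mul_one]
  monoidal

lemma whiskerRight_unit_braiding_comp_freeAct [BraidedCategory C] {A : C} {mul : A ⊗ A ⟶ A}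
    {unit : 𝟙_ C ⟶ A} (one_mul : (unit ▷ A) ≫ mul = (λ_ A).hom) (X : C) :
    (((λ_ X).inv ≫ (unit ▷ X)) ▷ A) ≫ (α_ A X A).hom ≫ (A ◁ (β_ X A).hom) ≫ freeAct mul X
      = (β_ X A).hom := by
  rw [freeAct, comp_whiskerRight_assoc, associator_naturality_left_assoc, ← whisker_exchange_assoc,
    associator_inv_naturality_left_assoc, ← comp_whiskerRight, one_mul,
    leftUnitor_inv_whiskerRight_assoc, Iso.inv_hom_id_assoc, ← leftUnitor_inv_naturality_assoc]
  monoidal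

variable [SymmetricCategory C]

lemma eta_tensor_eta_comp_mul_comp_map_comp_a (Φ : AlgebraModality C) (B : Φ.T.Algebra) {X : C}
    (g : X ⟶ B.A) :
    (Φ.T.η.app X ⊗ₘ Φ.T.η.app X) ≫ Φ.mul X ≫ Φ.T.map g ≫ B.a = (g ⊗ₘ g) ≫ algMul Φ B := by
  have hη : Φ.T.η.app X ≫ Φ.T.map g = g ≫ Φ.T.η.app B.A := (Φ.T.η.naturality g).symm
  rw [← Category.assoc (Φ.mul X), ← (Φ.ismod.map_hom g).map_mul, Category.assoc,
    tensorHom_comp_tensorHom_assoc, hη, ← tensorHom_comp_tensorHom_assoc, algMul]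

variable [AdditiveMonoidal C]

lemma eta_tensor_eta_comp_mul_comp_d (D : Codifferential C) (X : C) :
    (D.T.η.app X ⊗ₘ D.T.η.app X) ≫ D.mul X ≫ D.d X
      = (𝟙 (X ⊗ X) + (β_ X X).hom) ≫ (D.T.η.app X ▷ X) := by
  have leibniz : D.mul X ≫ D.d X = (D.T.obj X ◁ D.d X) ≫ freeAct (D.mul X) X
      + (D.d X ▷ D.T.obj X) ≫ (α_ (D.T.obj X) X (D.T.obj X)).hom ≫
          (D.T.obj X ◁ (β_ X (D.T.obj X)).hom) ≫ freeAct (D.mul X) X :=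
    D.iscodiff.d2 X
  rw [leibniz, CMonEnriched.comp_add, CMonEnriched.add_comp, Category.id_comp]
  congr 1
  · rw [MonoidalCategory.tensorHom_def, Category.assoc, ← MonoidalCategory.whiskerLeft_comp_assoc,
      D.iscodiff.d3]
    dsimp only [Functor.id_obj]
    rw [whiskerLeft_unit_comp_freeAct (D.ismod.commAlg X).mul_one, Category.comp_id]
  · rw [MonoidalCategory.tensorHom_def', Category.assoc, ← comp_whiskerRight_assoc, D.iscodiff.d3]
    dsimp only [Functor.id_obj]
    rw [whiskerRight_unit_braiding_comp_freeAct (D.ismod.commAlg X).one_mul,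
      BraidedCategory.braiding_naturality_right]

variable [HasBinaryBiproducts C]

lemma Wbeta_fst (D : Codifferential C) (A : D.T.Algebra) {M : C} (act : A.A ⊗ M ⟶ M) :
    Wbeta D A act ≫ biprod.fst = D.T.map biprod.fst ≫ A.a :=
  biprod.lift_fst _ _

lemma Wbeta_snd (D : Codifferential C) (A : D.T.Algebra) {M : C} (act : A.A ⊗ M ⟶ M) :
    Wbeta D A act ≫ biprod.snd
      = D.d (A.A ⊞ M) ≫ ((D.T.map biprod.fst ≫ A.a) ⊗ₘ biprod.snd) ≫ act := by
  rw [Wbeta, biprod.lift_snd, Wbeta2, tensorHom_comp_tensorHom_assoc, Category.comp_id]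

end Monoidal

theorem statement6_general {C : Type u} [Category.{v} C] [MonoidalCategory C] [SymmetricCategory C]
    [AdditiveMonoidal C] [HasBinaryBiproducts C]
    (D : Codifferential C) (A : D.T.Algebra) {M : C} (act : A.A ⊗ M ⟶ M) :
    (((D.T.η.app (A.A ⊞ M) ⊗ₘ D.T.η.app (A.A ⊞ M)) ≫ D.mul (A.A ⊞ M) ≫ Wbeta D A act) ≫
          biprod.fst
        = ((biprod.fst ⊗ₘ biprod.fst : (A.A ⊞ M) ⊗ (A.A ⊞ M) ⟶ A.A ⊗ A.A)) ≫ algMul D.toAlgebraModality A) ∧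
    (((D.T.η.app (A.A ⊞ M) ⊗ₘ D.T.η.app (A.A ⊞ M)) ≫ D.mul (A.A ⊞ M) ≫ Wbeta D A act) ≫
          biprod.snd
        = (𝟙 ((A.A ⊞ M) ⊗ (A.A ⊞ M)) + (β_ (A.A ⊞ M) (A.A ⊞ M)).hom) ≫
            ((biprod.fst ⊗ₘ biprod.snd : (A.A ⊞ M) ⊗ (A.A ⊞ M) ⟶ A.A ⊗ M)) ≫ act) := by
  refine ⟨?_, ?_⟩
  · rw [Category.assoc, Category.assoc, Wbeta_fst, eta_tensor_eta_comp_mul_comp_map_comp_a]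
  · rw [Category.assoc, Category.assoc, Wbeta_snd, ← Category.assoc (D.mul _), ← Category.assoc,
      eta_tensor_eta_comp_mul_comp_d, Category.assoc, whiskerRight_comp_tensorHom_assoc,
      eta_comp_map_comp_a]

/-- the commutative algebra induced by the `T`-algebra `W(A,M)` is the
infinitesimal extension of `A` by `M`. -/
theorem statement6 {C : Type u} [Category.{v} C] [MonoidalCategory C] [SymmetricCategory C]
    [AdditiveMonoidal C] [HasBinaryBiproducts C]
    (D : Codifferential C) (A : D.T.Algebra) {M : C} (act : A.A ⊗ M ⟶ M)
    (hact : IsModule (algMul D.toAlgebraModality A) (algUnit D.toAlgebraModality A) act) :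
    (((D.T.η.app (A.A ⊞ M) ⊗ₘ D.T.η.app (A.A ⊞ M)) ≫ D.mul (A.A ⊞ M) ≫ Wbeta D A act) ≫
          biprod.fst
        = ((biprod.fst ⊗ₘ biprod.fst : (A.A ⊞ M) ⊗ (A.A ⊞ M) ⟶ A.A ⊗ A.A)) ≫ algMul D.toAlgebraModality A) ∧
    (((D.T.η.app (A.A ⊞ M) ⊗ₘ D.T.η.app (A.A ⊞ M)) ≫ D.mul (A.A ⊞ M) ≫ Wbeta D A act) ≫
          biprod.snd
        = (𝟙 ((A.A ⊞ M) ⊗ (A.A ⊞ M)) + (β_ (A.A ⊞ M) (A.A ⊞ M)).hom) ≫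
            ((biprod.fst ⊗ₘ biprod.snd : (A.A ⊞ M) ⊗ (A.A ⊞ M) ⟶ A.A ⊗ M)) ≫ act) :=
  statement6_general D A act

end CodiffPaper
end

section
/- Let C be a codifferential category with finite coproducts, (A, a) a T-algebra, and M, N modules over the induced algebra A. If h : M → N is a morphism of A-modules, then 1_A ⊕ h : A⊕M → A⊕N is a morphism of T-algebras W(A,M) → W(A,N). -/
open CategoryTheory CategoryTheory.Limits CategoryTheory.MonoidalCategory

universe v u

namespace CodiffPaper

variable {C : Type u} [Category.{v} C]

section Wbeta

variable [MonoidalCategory C] [SymmetricCategory C] [AdditiveMonoidal C] [HasBinaryBiproducts C]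
  (D : Codifferential C) (A : D.T.Algebra) {M N : C}

theorem Wbeta2_map_of_isModuleMap {actM : A.A ⊗ M ⟶ M} {actN : A.A ⊗ N ⟶ N} {h : M ⟶ N}
    (hlin : IsModuleMap actM actN h) :
    D.T.map (biprod.map (𝟙 A.A) h) ≫ Wbeta2 D A actN = Wbeta2 D A actM ≫ h := by
  -- naturality of `d` moves `T(1 ⊕ h)` across `d`, then linearity moves `h` across the action
  rw [Wbeta2, Wbeta2, reassoc_of% D.iscodiff.d_natural, tensorHom_comp_tensorHom_assoc,
    ← Functor.map_comp, biprod.map_fst, Category.comp_id, biprod.map_snd]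
  simp only [Category.assoc]
  rw [hlin, ← id_tensorHom]
  simp only [tensorHom_comp_tensorHom_assoc, Category.comp_id, Category.id_comp]

end Wbeta

theorem statement7_general {C : Type u} [Category.{v} C] [MonoidalCategory C] [SymmetricCategory C]
    [AdditiveMonoidal C] [HasBinaryBiproducts C]
    (D : Codifferential C) (A : D.T.Algebra) {M N : C}
    (actM : A.A ⊗ M ⟶ M) (actN : A.A ⊗ N ⟶ N)
    (h : M ⟶ N) (hlin : IsModuleMap actM actN h) :
    D.T.map (biprod.map (𝟙 A.A) h) ≫ Wbeta D A actN
      = Wbeta D A actM ≫ biprod.map (𝟙 A.A) h := by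
  apply biprod.hom_ext
  · simp only [Wbeta, Category.assoc, biprod.lift_fst, biprod.map_fst, Category.comp_id,
      ← Functor.map_comp_assoc]
  · simp only [Wbeta, Category.assoc, biprod.lift_snd, biprod.map_snd, biprod.lift_snd_assoc,
      Wbeta2_map_of_isModuleMap D A hlin]

/-- if `h : M ⟶ N` is a morphism of `A`-modules then
`1_A ⊕ h : A ⊕ M ⟶ A ⊕ N` is a morphism of `T`-algebras `W(A,M) ⟶ W(A,N)`. -/
theorem statement7 {C : Type u} [Category.{v} C] [MonoidalCategory C] [SymmetricCategory C]
    [AdditiveMonoidal C] [HasBinaryBiproducts C]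
    (D : Codifferential C) (A : D.T.Algebra) {M N : C}
    (actM : A.A ⊗ M ⟶ M) (actN : A.A ⊗ N ⟶ N)
    (hM : IsModule (algMul D.toAlgebraModality A) (algUnit D.toAlgebraModality A) actM)
    (hN : IsModule (algMul D.toAlgebraModality A) (algUnit D.toAlgebraModality A) actN)
    (h : M ⟶ N) (hlin : IsModuleMap actM actN h) :
    D.T.map (biprod.map (𝟙 A.A) h) ≫ Wbeta D A actN
      = Wbeta D A actM ≫ biprod.map (𝟙 A.A) h :=
  statement7_general D A actM actN h hlin

end CodiffPaper
end

section
/- Let C be a codifferential category with finite coproducts, (A, ν) a T-algebra, and M a module over the induced algebra A. A morphism ∂ : A → M is a T-derivation if and only if ν;∂ = d_{TA};(ν ⊗ ∂);•_M : TA → M (the chain-rule equation). -/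
open CategoryTheory CategoryTheory.Limits CategoryTheory.MonoidalCategory

universe v u

namespace CodiffPaper

variable {C : Type u} [Category.{v} C]

/-! Naturality of the deriving transform turns the second component of `T⟨1, ∂⟩ ; β` into
`d ; (ν ⊗ ∂) ; •`, while its first component is `ν` for every `∂`; so `⟨1, ∂⟩` is a
`T`-algebra map exactly when the chain-rule equation holds. -/

section WAlgebra

variable [MonoidalCategory C] [SymmetricCategory C] [AdditiveMonoidal C] [HasBinaryBiproducts C]
  (D : Codifferential C) (A : D.T.Algebra) {M : C} (act : A.A ⊗ M ⟶ M)

theorem map_lift_comp_Wbeta2 {X : C} (f : X ⟶ A.A) (g : X ⟶ M) :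
    D.T.map (biprod.lift f g) ≫ Wbeta2 D A act = D.d X ≫ (D.T.map f ≫ A.a ⊗ₘ g) ≫ act := by
  rw [Wbeta2, ← Category.assoc, D.iscodiff.d_natural, Category.assoc,
    tensorHom_comp_tensorHom_assoc, ← D.T.map_comp, biprod.lift_fst, biprod.lift_snd,
    tensorHom_comp_tensorHom_assoc, Category.comp_id]

theorem map_lift_comp_Wbeta {X : C} (f : X ⟶ A.A) (g : X ⟶ M) :
    D.T.map (biprod.lift f g) ≫ Wbeta D A act =
      biprod.lift (D.T.map f ≫ A.a) (D.d X ≫ (D.T.map f ≫ A.a ⊗ₘ g) ≫ act) := by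
  apply biprod.hom_ext
  · rw [Wbeta, Category.assoc, biprod.lift_fst, ← Functor.map_comp_assoc, biprod.lift_fst,
      biprod.lift_fst]
  · rw [Wbeta, Category.assoc, biprod.lift_snd, map_lift_comp_Wbeta2, biprod.lift_snd]

end WAlgebra

theorem statement9_general {C : Type u} [Category.{v} C] [MonoidalCategory C] [SymmetricCategory C]
    [AdditiveMonoidal C] [HasBinaryBiproducts C]
    (D : Codifferential C) (A : D.T.Algebra) {M : C} (act : A.A ⊗ M ⟶ M)
    (der : A.A ⟶ M) :
    (D.T.map (biprod.lift (𝟙 A.A) der) ≫ Wbeta D A act = A.a ≫ biprod.lift (𝟙 A.A) der) ↔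
    (A.a ≫ der = D.d A.A ≫ (A.a ⊗ₘ der) ≫ act) := by
  rw [map_lift_comp_Wbeta, D.T.map_id, Category.id_comp]
  constructor
  · intro h
    simpa using (congrArg (· ≫ biprod.snd) h).symm
  · intro h
    apply biprod.hom_ext <;> simp [h]

/-- `der : A ⟶ M` is a `T`-derivation iff the chain-rule equation
`ν ; der = d_{TA} ; (ν ⊗ der) ; •` holds. -/
theorem statement9 {C : Type u} [Category.{v} C] [MonoidalCategory C] [SymmetricCategory C]
    [AdditiveMonoidal C] [HasBinaryBiproducts C]
    (D : Codifferential C) (A : D.T.Algebra) {M : C} (act : A.A ⊗ M ⟶ M)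
    (hact : IsModule (algMul D.toAlgebraModality A) (algUnit D.toAlgebraModality A) act)
    (der : A.A ⟶ M) :
    (D.T.map (biprod.lift (𝟙 A.A) der) ≫ Wbeta D A act = A.a ≫ biprod.lift (𝟙 A.A) der) ↔
    (A.a ≫ der = D.d A.A ≫ (A.a ⊗ₘ der) ≫ act) :=
  statement9_general D A act der

end CodiffPaper
end

section
/- Let C be a codifferential category. For every object C, the deriving transform d_{TC} : TC → TC ⊗ C is a universal T-derivation on the free T-algebra (TC, μ_C): for every module M over the algebra TC and every T-derivation ∂ : TC → M there exists a unique TC-linear morphism ∂# : TC ⊗ C → M such that d_{TC};∂# = ∂. In other words, TC ⊗ C is a module of Kähler T-differentials for (TC, μ_C). -/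
open CategoryTheory CategoryTheory.Limits CategoryTheory.MonoidalCategory

universe v u

namespace CodiffPaper

variable {C : Type u} [Category.{v} C]

/-! The module `TC ⊗ C` is free on `C`, with generators `η ; d = e ⊗ 1 : C ⟶ TC ⊗ C` (axiom d3),
so a linear map out of it is determined by its restriction to `C`; this forces
`∂# = (1 ⊗ η;∂);•`, which is linear. It remains to see `d ; ∂# = ∂`: by naturality of `d` at `η`
and `Tη ; μ = 1`, the left side is `Tη ; d ; (μ ⊗ ∂) ; •`, which the `T`-derivation identity
turns into `Tη ; μ ; ∂ = ∂`. -/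

section FreeModule

variable [MonoidalCategory C] {A X M : C}

def freeGen (unit : 𝟙_ C ⟶ A) (X : C) : X ⟶ A ⊗ X :=
  (λ_ X).inv ≫ (unit ▷ X)

theorem whiskerLeft_freeGen_freeAct {mul : A ⊗ A ⟶ A} {unit : 𝟙_ C ⟶ A}
    (mul_one : (A ◁ unit) ≫ mul = (ρ_ A).hom) :
    (A ◁ freeGen unit X) ≫ freeAct mul X = 𝟙 (A ⊗ X) := by
  have hunit : ((A ◁ unit) ▷ X) ≫ (mul ▷ X) = (ρ_ A).hom ▷ X := by
    rw [← comp_whiskerRight, mul_one]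
  calc (A ◁ freeGen unit X) ≫ freeAct mul X
      = (A ◁ (λ_ X).inv) ≫ (α_ A (𝟙_ C) X).inv ≫ ((A ◁ unit) ▷ X) ≫ (mul ▷ X) := by
        simp [freeGen, freeAct]
    _ = 𝟙 (A ⊗ X) := by rw [hunit]; simp

theorem IsModuleMap.eq_whiskerLeft_comp_act {mul : A ⊗ A ⟶ A} {unit : 𝟙_ C ⟶ A}
    {act : A ⊗ M ⟶ M} (mul_one : (A ◁ unit) ≫ mul = (ρ_ A).hom) {f : A ⊗ X ⟶ M}
    (hf : IsModuleMap (freeAct mul X) act f) :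
    f = (A ◁ (freeGen unit X ≫ f)) ≫ act := by
  calc f = ((A ◁ freeGen unit X) ≫ freeAct mul X) ≫ f := by
        rw [whiskerLeft_freeGen_freeAct mul_one, Category.id_comp]
    _ = (A ◁ (freeGen unit X ≫ f)) ≫ act := by
        rw [Category.assoc, hf, whiskerLeft_comp_assoc]

theorem isModuleMap_freeAct_whiskerLeft_comp_act {mul : A ⊗ A ⟶ A} {act : A ⊗ M ⟶ M}
    (mul_act : (mul ▷ M) ≫ act = (α_ A A M).hom ≫ (A ◁ act) ≫ act) (g : X ⟶ M) :
    IsModuleMap (freeAct mul X) act ((A ◁ g) ≫ act) := by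
  have act_act : (A ◁ act) ≫ act = (α_ A A M).inv ≫ (mul ▷ M) ≫ act := by
    rw [mul_act, Iso.inv_hom_id_assoc]
  calc freeAct mul X ≫ (A ◁ g) ≫ act
      = (α_ A A X).inv ≫ ((A ⊗ A) ◁ g) ≫ (mul ▷ M) ≫ act := by
        rw [freeAct, Category.assoc, whisker_exchange_assoc]
    _ = (A ◁ ((A ◁ g) ≫ act)) ≫ act := by
        rw [← associator_inv_naturality_right_assoc, ← act_act, whiskerLeft_comp_assoc]

end FreeModule

theorem Codifferential.d_comp_whiskerLeft_comp_act [MonoidalCategory C] [SymmetricCategory C]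
    [AdditiveMonoidal C] (D : Codifferential C) {X M : C} (act : D.T.obj X ⊗ M ⟶ M)
    (der : D.T.obj X ⟶ M)
    (hder : D.d (D.T.obj X) ≫ (D.T.μ.app X ⊗ₘ der) ≫ act = D.T.μ.app X ≫ der) :
    D.d X ≫ (D.T.obj X ◁ (D.T.η.app X ≫ der)) ≫ act = der := by
  have hη : D.T.obj X ◁ (D.T.η.app X ≫ der) =
      (D.T.map (D.T.η.app X) ⊗ₘ D.T.η.app X) ≫ (D.T.μ.app X ⊗ₘ der) := by
    rw [tensorHom_comp_tensorHom, Monad.right_unit, id_tensorHom]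
    rfl
  calc D.d X ≫ (D.T.obj X ◁ (D.T.η.app X ≫ der)) ≫ act
      = (D.T.map (D.T.η.app X) ≫ D.d (D.T.obj X)) ≫ (D.T.μ.app X ⊗ₘ der) ≫ act := by
        rw [hη, D.iscodiff.d_natural]; simp only [Category.assoc]; rfl
    _ = der := by rw [Category.assoc, hder]; exact Monad.right_unit_assoc _ _ der

/-- in a codifferential category the deriving transform
`d_{TC} : TC ⟶ TC ⊗ C` is a universal `T`-derivation on the free `T`-algebra `(TC, μ_C)`:
`TC ⊗ C` is a module of Kähler `T`-differentials. -/
theorem statement11 {C : Type u} [Category.{v} C] [MonoidalCategory C] [SymmetricCategory C]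
    [AdditiveMonoidal C] (D : Codifferential C) (X : C) {M : C}
    (act : D.T.obj X ⊗ M ⟶ M) (hact : IsModule (D.mul X) (D.unit X) act)
    (der : D.T.obj X ⟶ M)
    (hder : D.d (D.T.obj X) ≫ (D.T.μ.app X ⊗ₘ der) ≫ act = D.T.μ.app X ≫ der) :
    ∃! h : D.T.obj X ⊗ X ⟶ M,
      IsModuleMap (freeAct (D.mul X) X) act h ∧ D.d X ≫ h = der := by
  have mul_one := (D.iscodiff.ismod.commAlg X).mul_one
  have eta_d : D.T.η.app X ≫ D.d X = freeGen (D.unit X) X := D.iscodiff.d3 X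
  refine ⟨(D.T.obj X ◁ (D.T.η.app X ≫ der)) ≫ act,
    ⟨isModuleMap_freeAct_whiskerLeft_comp_act hact.mul_act _,
      D.d_comp_whiskerLeft_comp_act act der hder⟩, ?_⟩
  rintro h ⟨h_linear, h_der⟩
  rw [h_linear.eq_whiskerLeft_comp_act mul_one, ← eta_d, Category.assoc, h_der]

end CodiffPaper
end

section
/- Let C be a codifferential category with finite coproducts, let (A, a) and (B, b) be T-algebras, let M be a module over the induced algebra B, and let g : A → B be a T-algebra homomorphism. Then g ⊕ 1_M : A⊕M → B⊕M is a morphism of T-algebras W(A, M_A) → W(B, M), where M_A is the A-module obtained from M by restriction of scalars along the induced algebra homomorphism g. -/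
open CategoryTheory CategoryTheory.Limits CategoryTheory.MonoidalCategory

universe v u

namespace CodiffPaper

variable {C : Type u} [Category.{v} C]

/-! `W` is functorial in pairs `(g, h)` of a `T`-algebra morphism and a map of modules along it.
On the first component this is the `T`-algebra square of `g`; on the second, naturality of the
deriving transform `d` moves `T(g ⊕ h)` past `d`, after which the square of `g` and the
compatibility of `h` with the actions finish the computation. -/

lemma map_biprodMap_tensorHom_comp_fst_snd [MonoidalCategory C] [HasZeroMorphisms C]
    [HasBinaryBiproducts C] {T : C ⥤ C} {X Y M N : C} (f : X ⟶ Y) (h : M ⟶ N) :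
    (T.map (biprod.map f h) ⊗ₘ biprod.map f h) ≫ (T.map biprod.fst ⊗ₘ biprod.snd)
      = (T.map biprod.fst ⊗ₘ biprod.snd) ≫ (T.map f ⊗ₘ h) := by
  simp only [tensorHom_comp_tensorHom, ← T.map_comp, biprod.map_fst, biprod.map_snd]

section WFunctoriality

variable [MonoidalCategory C] [SymmetricCategory C] [AdditiveMonoidal C] [HasBinaryBiproducts C]
  (D : Codifferential C) {A B : D.T.Algebra} (g : A ⟶ B) {M N : C} (h : M ⟶ N)
  {actM : A.A ⊗ M ⟶ M} {actN : B.A ⊗ N ⟶ N}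

lemma map_biprodMap_comp_Wbeta2 (h_act : (g.f ⊗ₘ h) ≫ actN = actM ≫ h) :
    D.T.map (biprod.map g.f h) ≫ Wbeta2 D B actN = Wbeta2 D A actM ≫ h := by
  have hg : (D.T.map g.f ⊗ₘ h) ≫ (B.a ⊗ₘ 𝟙 N) = (A.a ⊗ₘ 𝟙 M) ≫ (g.f ⊗ₘ h) := by
    simp only [tensorHom_comp_tensorHom, Category.comp_id, Category.id_comp, g.h]
  simp only [Wbeta2, ← Category.assoc, D.iscodiff.d_natural]
  simp only [Category.assoc, reassoc_of% map_biprodMap_tensorHom_comp_fst_snd, reassoc_of% hg, h_act]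

theorem map_biprodMap_comp_Wbeta (h_act : (g.f ⊗ₘ h) ≫ actN = actM ≫ h) :
    D.T.map (biprod.map g.f h) ≫ Wbeta D B actN = Wbeta D A actM ≫ biprod.map g.f h := by
  apply biprod.hom_ext
  · simp only [Wbeta, Category.assoc, biprod.lift_fst, biprod.map_fst, biprod.lift_fst_assoc,
      ← D.T.map_comp_assoc, g.h, D.T.map_comp]
  · simp only [Wbeta, Category.assoc, biprod.lift_snd, biprod.map_snd, biprod.lift_snd_assoc,
      map_biprodMap_comp_Wbeta2 D g h h_act]

end WFunctoriality

theorem statement12_general {C : Type u} [Category.{v} C] [MonoidalCategory C] [SymmetricCategory C]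
    [AdditiveMonoidal C] [HasBinaryBiproducts C]
    (D : Codifferential C) (A B : D.T.Algebra) (g : A ⟶ B) {M : C} (act : B.A ⊗ M ⟶ M) :
    D.T.map (biprod.map g.f (𝟙 M)) ≫ Wbeta D B act
      = Wbeta D A ((g.f ▷ M) ≫ act) ≫ biprod.map g.f (𝟙 M) :=
  map_biprodMap_comp_Wbeta D g (𝟙 M) (by simp only [tensorHom_id, Category.comp_id])

/-- for a `T`-algebra homomorphism `g : A ⟶ B` and a `B`-module `M`,
`g ⊕ 1_M` is a morphism of `T`-algebras `W(A, M_A) ⟶ W(B, M)`. -/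
theorem statement12 {C : Type u} [Category.{v} C] [MonoidalCategory C] [SymmetricCategory C]
    [AdditiveMonoidal C] [HasBinaryBiproducts C]
    (D : Codifferential C) (A B : D.T.Algebra) (g : A ⟶ B) {M : C} (act : B.A ⊗ M ⟶ M)
    (hact : IsModule (algMul D.toAlgebraModality B) (algUnit D.toAlgebraModality B) act) :
    D.T.map (biprod.map g.f (𝟙 M)) ≫ Wbeta D B act
      = Wbeta D A ((g.f ▷ M) ≫ act) ≫ biprod.map g.f (𝟙 M) :=
  statement12_general D A B g act

end CodiffPaper
end

section
/- Let C be a codifferential category with finite coproducts, let (A, a) and (B, b) be T-algebras, let M be a module over the induced algebra B, and let g : A → B be a T-algebra homomorphism. If ∂ : A → M is a morphism such that ⟨g, ∂⟩ : A → B⊕M is a T-algebra homomorphism (A, a) → W(B, M), then ∂ : A → M_A is a T-derivation, where M_A is the restriction of scalars of M along g. -/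
open CategoryTheory CategoryTheory.Limits CategoryTheory.MonoidalCategory

universe v u

namespace CodiffPaper

variable {C : Type u} [Category.{v} C]

/-! The first component of the structure map of `W(A, M_A)` only sees `A`, so `⟨1, ∂⟩` respects
it for any `∂`. For the second, naturality of the deriving transform shows that `β₂` of
`W(A, M_A)` is `T(g ⊕ 1)` followed by `β₂` of `W(B, M)`; as `⟨1, ∂⟩ ; (g ⊕ 1) = ⟨g, ∂⟩`, this
is the second component of the hypothesis on `⟨g, ∂⟩`. -/

section WAlgebra

variable {C : Type u} [Category.{v} C] [MonoidalCategory C] [SymmetricCategory C]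
  [AdditiveMonoidal C] [HasBinaryBiproducts C] (D : Codifferential C)

theorem map_lift_comp_Wbeta_fst {X : C} (A : D.T.Algebra) {M : C} (act : A.A ⊗ M ⟶ M)
    (f : X ⟶ A.A) (der : X ⟶ M) :
    D.T.map (biprod.lift f der) ≫ Wbeta D A act ≫ biprod.fst = D.T.map f ≫ A.a := by
  rw [Wbeta, biprod.lift_fst, ← Category.assoc, ← D.T.map_comp, biprod.lift_fst]

theorem Wbeta2_restrictScalars {A B : D.T.Algebra} (g : A ⟶ B) {M : C} (act : B.A ⊗ M ⟶ M) :
    Wbeta2 D A ((g.f ▷ M) ≫ act) = D.T.map (biprod.map g.f (𝟙 M)) ≫ Wbeta2 D B act := by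
  have hfst : D.T.map (biprod.map g.f (𝟙 M)) ≫ D.T.map biprod.fst ≫ B.a
      = D.T.map biprod.fst ≫ A.a ≫ g.f := by
    rw [← D.T.map_comp_assoc, biprod.map_fst, D.T.map_comp_assoc, g.h]
  rw [Wbeta2, Wbeta2, reassoc_of% (D.iscodiff.d_natural (biprod.map g.f (𝟙 M)))]
  simp only [← tensorHom_id, tensorHom_comp_tensorHom_assoc, Category.comp_id,
    hfst, biprod.map_snd]

end WAlgebra

theorem statement13_general {C : Type u} [Category.{v} C] [MonoidalCategory C] [SymmetricCategory C]
    [AdditiveMonoidal C] [HasBinaryBiproducts C]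
    (D : Codifferential C) (A B : D.T.Algebra) (g : A ⟶ B) {M : C} (act : B.A ⊗ M ⟶ M)
    (der : A.A ⟶ M)
    (hg : D.T.map (biprod.lift g.f der) ≫ Wbeta D B act = A.a ≫ biprod.lift g.f der) :
    D.T.map (biprod.lift (𝟙 A.A) der) ≫ Wbeta D A ((g.f ▷ M) ≫ act)
      = A.a ≫ biprod.lift (𝟙 A.A) der := by
  apply biprod.hom_ext
  · rw [Category.assoc, map_lift_comp_Wbeta_fst, D.T.map_id, Category.id_comp, Category.assoc,
      biprod.lift_fst, Category.comp_id]
  · have hg₂ : D.T.map (biprod.lift g.f der) ≫ Wbeta2 D B act = A.a ≫ der := by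
      simpa only [Wbeta, Category.assoc, biprod.lift_snd] using hg =≫ biprod.snd
    have hlift : biprod.lift (𝟙 A.A) der ≫ biprod.map g.f (𝟙 M) = biprod.lift g.f der := by
      ext <;> simp
    rw [Category.assoc, Category.assoc, biprod.lift_snd, Wbeta, biprod.lift_snd,
      Wbeta2_restrictScalars, ← D.T.map_comp_assoc, hlift, hg₂]

/-- if `⟨g, der⟩ : A ⟶ B ⊕ M` is a `T`-algebra homomorphism
`(A,a) ⟶ W(B,M)` then `der : A ⟶ M_A` is a `T`-derivation. -/
theorem statement13 {C : Type u} [Category.{v} C] [MonoidalCategory C] [SymmetricCategory C]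
    [AdditiveMonoidal C] [HasBinaryBiproducts C]
    (D : Codifferential C) (A B : D.T.Algebra) (g : A ⟶ B) {M : C} (act : B.A ⊗ M ⟶ M)
    (hact : IsModule (algMul D.toAlgebraModality B) (algUnit D.toAlgebraModality B) act)
    (der : A.A ⟶ M)
    (hg : D.T.map (biprod.lift g.f der) ≫ Wbeta D B act = A.a ≫ biprod.lift g.f der) :
    D.T.map (biprod.lift (𝟙 A.A) der) ≫ Wbeta D A ((g.f ▷ M) ≫ act)
      = A.a ≫ biprod.lift (𝟙 A.A) der :=
  statement13_general D A B g act der hg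

end CodiffPaper
end

section
/- Let C be a codifferential category with finite coproducts. For a T-algebra A and an object (B, M) of Mod_T, let Der(A, (B, M)) denote the set of pairs (g, ∂) where g : A → B is a T-algebra homomorphism and ∂ : A → M_A is a T-derivation. Then the assignment f ↦ (f;π₁, f;π₂) defines a bijection C^T(A, W(B,M)) ≅ Der(A, (B, M)), natural in A ∈ C^T and in (B, M) ∈ Mod_T. -/
/-!
A map `⟨g, ∂⟩ : X ⟶ W(B, M)` is a `T`-algebra morphism iff both of its components commute
with the structure maps. For the first this says that `g` is a `T`-algebra morphism; for the
second, naturality of `d` turns it into `ν ; ∂ = d ; ((Tg ; ν_B) ⊗ ∂) ; •`. Once `g` is a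
`T`-algebra morphism, `Tg ; ν_B = ν_A ; g`, so this is the same equation as the one saying that
`⟨1, ∂⟩ : A ⟶ W(A, M_A)` is a `T`-algebra morphism, i.e. that `∂` is a `T`-derivation.
-/

open CategoryTheory CategoryTheory.Limits CategoryTheory.MonoidalCategory

universe v u

namespace CodiffPaper

variable {C : Type u} [Category.{v} C]

section WAlgebra

variable {C : Type u} [Category.{v} C] [MonoidalCategory C] [SymmetricCategory C]
  [AdditiveMonoidal C] [HasBinaryBiproducts C] (D : Codifferential C)

lemma map_comp_Wbeta2 (B : D.T.Algebra) {M : C} (act : B.A ⊗ M ⟶ M) {X : C}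
    (h : X ⟶ B.A ⊞ M) :
    D.T.map h ≫ Wbeta2 D B act
      = D.d X ≫ ((D.T.map (h ≫ biprod.fst) ≫ B.a) ⊗ₘ (h ≫ biprod.snd)) ≫ act := by
  rw [Wbeta2, ← Category.assoc, D.iscodiff.d_natural h, Category.assoc,
    tensorHom_comp_tensorHom_assoc, tensorHom_comp_tensorHom_assoc, Category.comp_id,
    Category.assoc, ← Functor.map_comp_assoc]

lemma isTAlgebraHom_Wbeta_lift_iff {X : C} (ν : D.T.obj X ⟶ X) (B : D.T.Algebra) {M : C}
    (act : B.A ⊗ M ⟶ M) (g : X ⟶ B.A) (der : X ⟶ M) :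
    IsTAlgebraHom D.T ν (Wbeta D B act) (biprod.lift g der) ↔
      IsTAlgebraHom D.T ν B.a g ∧ D.d X ≫ ((D.T.map g ≫ B.a) ⊗ₘ der) ≫ act = ν ≫ der := by
  simp only [IsTAlgebraHom, biprod.hom_ext_iff, Wbeta, Category.assoc, biprod.lift_fst,
    biprod.lift_snd, map_comp_Wbeta2, ← Functor.map_comp_assoc]

lemma isTAlgebraHom_Wbeta_lift_id_iff (A B : D.T.Algebra) {M : C} (act : B.A ⊗ M ⟶ M)
    {g : A.A ⟶ B.A} (hg : IsTAlgebraHom D.T A.a B.a g) (der : A.A ⟶ M) :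
    IsTAlgebraHom D.T A.a (Wbeta D A ((g ▷ M) ≫ act)) (biprod.lift (𝟙 A.A) der) ↔
      D.d A.A ≫ ((D.T.map g ≫ B.a) ⊗ₘ der) ≫ act = A.a ≫ der := by
  rw [isTAlgebraHom_Wbeta_lift_iff, hg]
  simp [IsTAlgebraHom, tensorHom_comp_whiskerRight_assoc]

end WAlgebra

theorem statement15_general {C : Type u} [Category.{v} C] [MonoidalCategory C] [SymmetricCategory C]
    [AdditiveMonoidal C] [HasBinaryBiproducts C]
    (D : Codifferential C) (A B : D.T.Algebra) {M : C} (act : B.A ⊗ M ⟶ M)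
    (hW : IsTAlgStr D.T (Wbeta D B act)) :
    -- `f ↦ (f ; π₁, f ; π₂)` lands in `Der(A, (B,M))` ...
    (∀ f : A ⟶ (⟨B.A ⊞ M, Wbeta D B act, hW.1, hW.2⟩ : D.T.Algebra),
      IsTAlgebraHom D.T A.a B.a (f.f ≫ biprod.fst) ∧
      D.T.map (biprod.lift (𝟙 A.A) (f.f ≫ biprod.snd)) ≫
          Wbeta D A (((f.f ≫ biprod.fst) ▷ M) ≫ act)
        = A.a ≫ biprod.lift (𝟙 A.A) (f.f ≫ biprod.snd)) ∧
    -- ... and is bijective: every pair `(g, der)` arises from a unique `f`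
    (∀ (g : A.A ⟶ B.A) (der : A.A ⟶ M),
      IsTAlgebraHom D.T A.a B.a g →
      D.T.map (biprod.lift (𝟙 A.A) der) ≫ Wbeta D A ((g ▷ M) ≫ act)
        = A.a ≫ biprod.lift (𝟙 A.A) der →
      ∃! f : A ⟶ (⟨B.A ⊞ M, Wbeta D B act, hW.1, hW.2⟩ : D.T.Algebra),
        f.f = biprod.lift g der) := by
  refine ⟨fun f => ?_, fun g der hg hder => ?_⟩
  · have hf : IsTAlgebraHom D.T A.a (Wbeta D B act)
        (biprod.lift (f.f ≫ biprod.fst) (f.f ≫ biprod.snd)) := by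
      rw [show biprod.lift (f.f ≫ biprod.fst) (f.f ≫ biprod.snd) = f.f by ext <;> simp]
      exact f.h
    obtain ⟨hg, hder⟩ := (isTAlgebraHom_Wbeta_lift_iff D A.a B act _ _).1 hf
    exact ⟨hg, (isTAlgebraHom_Wbeta_lift_id_iff D A B act hg _).2 hder⟩
  · have hf : IsTAlgebraHom D.T A.a (Wbeta D B act) (biprod.lift g der) :=
      (isTAlgebraHom_Wbeta_lift_iff D A.a B act g der).2
        ⟨hg, (isTAlgebraHom_Wbeta_lift_id_iff D A B act hg der).1 hder⟩
    exact ⟨⟨biprod.lift g der, hf⟩, rfl, fun f' hf' => Monad.Algebra.Hom.ext hf'⟩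

/-- the assignment `f ↦ (f ; π₁, f ; π₂)` is a bijection
`C^T(A, W(B,M)) ≅ Der(A, (B,M))`. -/
theorem statement15 {C : Type u} [Category.{v} C] [MonoidalCategory C] [SymmetricCategory C]
    [AdditiveMonoidal C] [HasBinaryBiproducts C]
    (D : Codifferential C) (A B : D.T.Algebra) {M : C} (act : B.A ⊗ M ⟶ M)
    (hact : IsModule (algMul D.toAlgebraModality B) (algUnit D.toAlgebraModality B) act)
    (hW : IsTAlgStr D.T (Wbeta D B act)) :
    -- `f ↦ (f ; π₁, f ; π₂)` lands in `Der(A, (B,M))` ...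
    (∀ f : A ⟶ (⟨B.A ⊞ M, Wbeta D B act, hW.1, hW.2⟩ : D.T.Algebra),
      IsTAlgebraHom D.T A.a B.a (f.f ≫ biprod.fst) ∧
      D.T.map (biprod.lift (𝟙 A.A) (f.f ≫ biprod.snd)) ≫
          Wbeta D A (((f.f ≫ biprod.fst) ▷ M) ≫ act)
        = A.a ≫ biprod.lift (𝟙 A.A) (f.f ≫ biprod.snd)) ∧
    -- ... and is bijective: every pair `(g, der)` arises from a unique `f`
    (∀ (g : A.A ⟶ B.A) (der : A.A ⟶ M),
      IsTAlgebraHom D.T A.a B.a g →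
      D.T.map (biprod.lift (𝟙 A.A) der) ≫ Wbeta D A ((g ▷ M) ≫ act)
        = A.a ≫ biprod.lift (𝟙 A.A) der →
      ∃! f : A ⟶ (⟨B.A ⊞ M, Wbeta D B act, hW.1, hW.2⟩ : D.T.Algebra),
        f.f = biprod.lift g der) :=
  statement15_general D A B act hW

end CodiffPaper
end
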